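/- Let (G,S) be the Cayley graph of a finitely generated abelian group G ≅ ℤ^m ⊕ ⊕_{i=1}^l ℤ_{q_i}. Then every nonnegative harmonic function f : G → ℝ is constant (Liouville theorem). -/

import Mathlib

open MvPolynomial

/-- The discrete Laplacian on the Cayley graph of an abelian group `G` with a finite
(symmetric, listed with possible repetitions, hence a multiset) generating set `S`:
`L^S f x = ∑_{s ∈ S} (f (x + s) - f x)`, counted with multiplicity. -/
def lap {G : Type} [AddCommGroup G] (S : Multiset G) (f : G → ℝ) : G → ℝ := fun x =>
  (S.map fun s => f (x + s) - f x).sum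

/-- The squared gradient `|∇f|²(x) = ∑_{s ∈ S} (f (x + s) - f x)²`, with multiplicity. -/
def gradSq {G : Type} [AddCommGroup G] (S : Multiset G) (f : G → ℝ) (x : G) : ℝ :=
  (S.map fun s => (f (x + s) - f x) ^ 2).sum

/-- The word metric `d^S(x,y)`: the least `k` such that `y - x` is a sum of `k`
elements of `S` (i.e. the combinatorial distance in the Cayley graph). -/
noncomputable def wdist {G : Type} [AddCommGroup G] (S : Multiset G) (x y : G) : ℕ :=
  sInf {k : ℕ | ∃ w : Fin k → G, (∀ i, w i ∈ S) ∧ x + ∑ i, w i = y}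

/-- The closed ball `B_R(x) = {y : d^S(x,y) ≤ R}` in the word metric. -/
def ball {G : Type} [AddCommGroup G] (S : Multiset G) (x : G) (R : ℝ) : Set G :=
  {y | (wdist S x y : ℝ) ≤ R}

/-- The finitely generated abelian group `ℤ^m ⊕ ⊕_{i=1}^l ℤ_{q i}`. -/
abbrev AbG (m l : ℕ) (q : Fin l → ℕ) : Type := (Fin m → ℤ) × (∀ i : Fin l, ZMod (q i))

/-!
Nonnegative harmonic functions normalized by `h 0 = 1` form a compact family (Harnack
inequality), stable under the normalized translations `h ↦ h (z + ·) / h z`. Maximizing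
`h ↦ h u` over a closed nonempty stable subfamily yields a maximizer with
`h (u + ·) = h u * h`, and those functions form a smaller such subfamily. Doing this first for
a generator `t`, then for every element of `S`, gives an exponential `e` with `e t = max h t`.
Since `∑ₛ e s = |S| = ∑ₛ e (-s)` and `e s * e (-s) = 1`, AM–GM forces `e = 1` on `S`. Hence
`f (x + t) ≤ f x` for every generator `t`, and by symmetry of `S` the function `f` is constant.
-/

section Harmonic

variable {G : Type} [AddCommGroup G] {S : Multiset G}

lemma neg_mem_of_map_neg_eq (hsym : S.map (fun s => -s) = S) {s : G} (hs : s ∈ S) : -s ∈ S :=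
  hsym ▸ Multiset.mem_map_of_mem _ hs

lemma addSubmonoid_closure_eq_top (hsym : S.map (fun s => -s) = S)
    (hgen : AddSubgroup.closure {s | s ∈ S} = ⊤) : AddSubmonoid.closure {s : G | s ∈ S} = ⊤ := by
  have hneg : -{s : G | s ∈ S} = {s | s ∈ S} := Set.ext fun s =>
    ⟨fun hs => neg_neg s ▸ neg_mem_of_map_neg_eq hsym hs, neg_mem_of_map_neg_eq hsym⟩
  calc AddSubmonoid.closure {s | s ∈ S}
      = AddSubmonoid.closure ({s | s ∈ S} ∪ -{s | s ∈ S}) := by rw [hneg, Set.union_self]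
    _ = (AddSubgroup.closure {s | s ∈ S}).toAddSubmonoid :=
      (AddSubgroup.closure_toAddSubmonoid _).symm
    _ = ⊤ := by rw [hgen]; rfl

def IsHarmonic (S : Multiset G) (f : G → ℝ) : Prop := ∀ x, lap S f x = 0

lemma lap_sub (f g : G → ℝ) (x : G) : lap S (f - g) x = lap S f x - lap S g x := by
  simp only [lap, Pi.sub_apply, ← Multiset.sum_map_sub]
  congr 1
  exact Multiset.map_congr rfl fun _ _ => by ring

lemma lap_const_mul (c : ℝ) (f : G → ℝ) (x : G) :
    lap S (fun y => c * f y) x = c * lap S f x := by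
  simp only [lap, ← Multiset.sum_map_mul_left, mul_sub]

lemma lap_comp_add_left (f : G → ℝ) (z x : G) :
    lap S (fun y => f (z + y)) x = lap S f (z + x) := by
  simp only [lap, add_assoc]

lemma continuous_lap_apply (x : G) : Continuous fun f : G → ℝ => lap S f x :=
  continuous_multiset_sum _ fun _ _ => (continuous_apply _).sub (continuous_apply _)

lemma isHarmonic_const (c : ℝ) : IsHarmonic S fun _ => c := by
  simp [IsHarmonic, lap]

namespace IsHarmonic

variable {f g : G → ℝ}

lemma sub (hf : IsHarmonic S f) (hg : IsHarmonic S g) : IsHarmonic S (f - g) := fun x => by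
  rw [lap_sub, hf x, hg x, sub_zero]

lemma const_mul (hf : IsHarmonic S f) (c : ℝ) : IsHarmonic S fun y => c * f y := fun x => by
  rw [lap_const_mul, hf x, mul_zero]

lemma comp_add_left (hf : IsHarmonic S f) (z : G) : IsHarmonic S fun y => f (z + y) :=
  fun x => by rw [lap_comp_add_left, hf]

lemma sum_map_apply_add (hf : IsHarmonic S f) (x : G) :
    (S.map fun s => f (x + s)).sum = Multiset.card S * f x := by
  have h := hf x
  rw [lap, Multiset.sum_map_sub, Multiset.map_const', Multiset.sum_replicate, nsmul_eq_mul,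
    sub_eq_zero] at h
  exact h

lemma apply_add_le_card_mul (hf : IsHarmonic S f) (hf0 : 0 ≤ f) {s : G} (hs : s ∈ S) (x : G) :
    f (x + s) ≤ Multiset.card S * f x := by
  rw [← hf.sum_map_apply_add x]
  exact Multiset.single_le_sum (by simpa using fun _ _ => hf0 _) _ (Multiset.mem_map_of_mem _ hs)

end IsHarmonic

lemma exists_harnack_const (hS : AddSubmonoid.closure {s | s ∈ S} = ⊤) (y : G) :
    ∃ C : ℝ, 0 ≤ C ∧ ∀ f, IsHarmonic S f → 0 ≤ f → ∀ x, f (x + y) ≤ C * f x := by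
  induction (hS ▸ AddSubmonoid.mem_top y : y ∈ AddSubmonoid.closure {s | s ∈ S})
    using AddSubmonoid.closure_induction with
  | mem s hs => exact ⟨_, Nat.cast_nonneg _, fun f hf hf0 x => hf.apply_add_le_card_mul hf0 hs x⟩
  | zero => exact ⟨1, zero_le_one, fun f _ _ x => by rw [add_zero, one_mul]⟩
  | add y z _ _ hy hz =>
    obtain ⟨C, hC, hCf⟩ := hy
    obtain ⟨D, hD, hDf⟩ := hz
    refine ⟨D * C, mul_nonneg hD hC, fun f hf hf0 x => ?_⟩
    calc f (x + (y + z)) = f (x + y + z) := by rw [add_assoc]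
      _ ≤ D * f (x + y) := hDf f hf hf0 _
      _ ≤ D * (C * f x) := mul_le_mul_of_nonneg_left (hCf f hf hf0 x) hD
      _ = D * C * f x := by ring

lemma IsHarmonic.eq_zero_of_apply_eq_zero (hS : AddSubmonoid.closure {s | s ∈ S} = ⊤)
    {f : G → ℝ} (hf : IsHarmonic S f) (hf0 : 0 ≤ f) {x : G} (hx : f x = 0) (y : G) : f y = 0 := by
  obtain ⟨C, -, hC⟩ := exists_harnack_const hS (y - x)
  have := hC f hf hf0 x
  rw [hx, mul_zero, add_sub_cancel] at this
  exact le_antisymm this (hf0 y)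

def normalizedHarmonic (S : Multiset G) : Set (G → ℝ) := {h | IsHarmonic S h ∧ 0 ≤ h ∧ h 0 = 1}

noncomputable def normalizeAt (z : G) (h : G → ℝ) : G → ℝ := fun y => h (z + y) / h z

lemma pos_of_mem_normalizedHarmonic (hS : AddSubmonoid.closure {s | s ∈ S} = ⊤)
    {h : G → ℝ} (hh : h ∈ normalizedHarmonic S) (y : G) : 0 < h y := by
  obtain ⟨hharm, h0, h1⟩ := hh
  refine (h0 y).lt_of_ne fun hy => ?_
  simpa [h1] using hharm.eq_zero_of_apply_eq_zero hS h0 hy.symm 0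

lemma normalizeAt_mem_normalizedHarmonic {f : G → ℝ} (hf : IsHarmonic S f) (hpos : ∀ x, 0 < f x)
    (z : G) : normalizeAt z f ∈ normalizedHarmonic S := by
  refine ⟨?_, fun y => div_nonneg (hpos _).le (hpos z).le, by simp [normalizeAt, (hpos z).ne']⟩
  convert (hf.comp_add_left z).const_mul (f z)⁻¹ using 2
  exact div_eq_inv_mul _ _

lemma isClosed_normalizedHarmonic : IsClosed (normalizedHarmonic S) := by
  have harm : IsClosed {h : G → ℝ | IsHarmonic S h} := by
    simp only [IsHarmonic, Set.ofPred_forall]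
    exact isClosed_iInter fun x => isClosed_eq (continuous_lap_apply x) continuous_const
  have nonneg : IsClosed {h : G → ℝ | 0 ≤ h} := isClosed_le continuous_const continuous_id
  exact harm.inter (nonneg.inter (isClosed_eq (continuous_apply 0) continuous_const))

lemma isCompact_normalizedHarmonic (hS : AddSubmonoid.closure {s | s ∈ S} = ⊤) :
    IsCompact (normalizedHarmonic S) := by
  choose C _ hC using exists_harnack_const hS
  refine (isCompact_univ_pi fun y => isCompact_Icc (a := 0) (b := C y)).of_isClosed_subset
    isClosed_normalizedHarmonic fun h ⟨hharm, h0, h1⟩ y _ => ⟨h0 y, ?_⟩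
  simpa [h1] using hC y h hharm h0 0

def translationEigen (u : G) (c : ℝ) : Set (G → ℝ) := {h | ∀ y, h (u + y) = c * h y}

lemma isClosed_translationEigen (u : G) (c : ℝ) : IsClosed (translationEigen u c) := by
  simp only [translationEigen, Set.ofPred_forall]
  exact isClosed_iInter fun y =>
    isClosed_eq (continuous_apply _) (continuous_const.mul (continuous_apply y))

lemma normalizeAt_mem_translationEigen {h : G → ℝ} {u : G} {c : ℝ}
    (hh : h ∈ translationEigen u c) (z : G) : normalizeAt z h ∈ translationEigen u c := fun y => by
  simp only [normalizeAt, add_left_comm z u y, hh (z + y), mul_div_assoc]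

lemma eq_apply_of_mem_translationEigen {h : G → ℝ} {u : G} {c : ℝ} (h0 : h 0 = 1)
    (hh : h ∈ translationEigen u c) : c = h u := by
  simpa [h0] using (hh 0).symm

structure IsInvariantFamily (S : Multiset G) (A : Set (G → ℝ)) : Prop where
  subset : A ⊆ normalizedHarmonic S
  nonempty : A.Nonempty
  isClosed : IsClosed A
  normalizeAt_mem : ∀ h ∈ A, ∀ z, normalizeAt z h ∈ A

lemma isInvariantFamily_normalizedHarmonic (hS : AddSubmonoid.closure {s | s ∈ S} = ⊤) :
    IsInvariantFamily S (normalizedHarmonic S) where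
  subset := subset_rfl
  nonempty := ⟨fun _ => 1, isHarmonic_const 1, fun _ => zero_le_one, rfl⟩
  isClosed := isClosed_normalizedHarmonic
  normalizeAt_mem _ hh :=
    normalizeAt_mem_normalizedHarmonic hh.1 (pos_of_mem_normalizedHarmonic hS hh)

namespace IsInvariantFamily

variable {A : Set (G → ℝ)}

/-- Comparing the maximizer `h` with its normalized translates shows `h (u + ·) ≤ h u * h`;
the difference is a nonnegative harmonic function vanishing at `0`, hence zero. -/
lemma mem_translationEigen_of_isMaxOn (hS : AddSubmonoid.closure {s | s ∈ S} = ⊤)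
    (hA : IsInvariantFamily S A) {h : G → ℝ} (hh : h ∈ A) {u : G}
    (hmax : IsMaxOn (fun h : G → ℝ => h u) A h) : h ∈ translationEigen u (h u) := by
  obtain ⟨hharm, -, h1⟩ := hA.subset hh
  have hpos := pos_of_mem_normalizedHarmonic hS (hA.subset hh)
  set g : G → ℝ := (fun y => h u * h y) - fun y => h (u + y) with hg
  have hg0 : 0 ≤ g := fun y => by
    have : h (y + u) / h y ≤ h u := hmax (hA.normalizeAt_mem h hh y)
    rw [div_le_iff₀ (hpos y), add_comm] at this
    simpa [hg] using this
  have hgharm : IsHarmonic S g := (hharm.const_mul (h u)).sub (hharm.comp_add_left u)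
  intro y
  have := hgharm.eq_zero_of_apply_eq_zero hS hg0 (x := 0) (by simp [hg, h1]) y
  simp only [hg, Pi.sub_apply] at this
  linarith

lemma exists_inter_translationEigen (hS : AddSubmonoid.closure {s | s ∈ S} = ⊤)
    (hA : IsInvariantFamily S A) (u : G) :
    ∃ c, (∀ h ∈ A, h u ≤ c) ∧ IsInvariantFamily S (A ∩ translationEigen u c) := by
  have hcpt : IsCompact A :=
    (isCompact_normalizedHarmonic hS).of_isClosed_subset hA.isClosed hA.subset
  obtain ⟨h, hh, hmax⟩ := hcpt.exists_isMaxOn hA.nonempty (continuous_apply u).continuousOn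
  exact ⟨h u, fun _ hh' => hmax hh',
    { subset := Set.inter_subset_left.trans hA.subset
      nonempty := ⟨h, hh, hA.mem_translationEigen_of_isMaxOn hS hh hmax⟩
      isClosed := hA.isClosed.inter (isClosed_translationEigen u _)
      normalizeAt_mem := fun h' hh' z =>
        ⟨hA.normalizeAt_mem h' hh'.1 z, normalizeAt_mem_translationEigen hh'.2 z⟩ }⟩

lemma exists_mem_forall_translationEigen (hS : AddSubmonoid.closure {s | s ∈ S} = ⊤)
    (L : List G) (hA : IsInvariantFamily S A) : ∃ h ∈ A, ∀ u ∈ L, h ∈ translationEigen u (h u) := by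
  induction L generalizing A with
  | nil =>
    obtain ⟨h, hh⟩ := hA.nonempty
    exact ⟨h, hh, by simp⟩
  | cons u L ih =>
    obtain ⟨c, -, hAc⟩ := hA.exists_inter_translationEigen hS u
    obtain ⟨h, hh, hL⟩ := ih hAc
    refine ⟨h, hh.1, List.forall_mem_cons.2 ⟨?_, hL⟩⟩
    rw [← eq_apply_of_mem_translationEigen (hA.subset hh.1).2.2 hh.2]
    exact hh.2

end IsInvariantFamily

lemma eq_one_of_forall_mem_translationEigen (hsym : S.map (fun s => -s) = S) {h : G → ℝ}
    (hh : h ∈ normalizedHarmonic S) (hexp : ∀ s ∈ S, h ∈ translationEigen s (h s))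
    {t : G} (ht : t ∈ S) : h t = 1 := by
  obtain ⟨hharm, h0, h1⟩ := hh
  have hinv : ∀ s ∈ S, h s * h (-s) = 1 := fun s hs => by
    rw [← hexp s hs (-s), add_neg_cancel, h1]
  have hsum : (S.map fun s => h s).sum = Multiset.card S := by
    simpa [h1] using hharm.sum_map_apply_add 0
  have hsum_neg : (S.map fun s => h (-s)).sum = (S.map fun s => h s).sum := by
    conv_rhs => rw [← hsym, Multiset.map_map]
    rfl
  have hpos : ∀ s ∈ S, 0 < h s := fun s hs =>
    (h0 s).lt_of_ne fun e => by simpa [← e] using hinv s hs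
  -- `h s * (h s + h (-s) - 2) = (h s - 1) ^ 2`
  have hterm : ∀ s ∈ S, 0 ≤ h s + h (-s) - 2 := fun s hs => by
    nlinarith [hinv s hs, hpos s hs, sq_nonneg (h s - 1)]
  have htotal : (S.map fun s => h s + h (-s) - 2).sum = 0 := by
    rw [Multiset.sum_map_sub, Multiset.sum_map_add, hsum_neg, hsum, Multiset.map_const',
      Multiset.sum_replicate, nsmul_eq_mul]
    ring
  have hle : h t + h (-t) - 2 ≤ 0 :=
    htotal ▸ Multiset.single_le_sum (by simpa using hterm) _ (Multiset.mem_map_of_mem _ ht)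
  nlinarith [hinv t ht, hterm t ht, hpos t ht, sq_nonneg (h t - 1)]

lemma apply_le_one_of_mem_normalizedHarmonic (hS : AddSubmonoid.closure {s | s ∈ S} = ⊤)
    (hsym : S.map (fun s => -s) = S) {t : G} (ht : t ∈ S) {h : G → ℝ}
    (hh : h ∈ normalizedHarmonic S) : h t ≤ 1 := by
  obtain ⟨c, hc, hA⟩ := (isInvariantFamily_normalizedHarmonic hS).exists_inter_translationEigen hS t
  obtain ⟨e, he, hexp⟩ := hA.exists_mem_forall_translationEigen hS S.toList
  calc h t ≤ c := hc h hh
    _ = e t := eq_apply_of_mem_translationEigen (hA.subset he).2.2 he.2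
    _ = 1 := eq_one_of_forall_mem_translationEigen hsym (hA.subset he)
        (fun s hs => hexp s (Multiset.mem_toList.2 hs)) ht

lemma IsHarmonic.apply_add_le (hS : AddSubmonoid.closure {s | s ∈ S} = ⊤)
    (hsym : S.map (fun s => -s) = S) {f : G → ℝ} (hf : IsHarmonic S f) (hpos : ∀ x, 0 < f x)
    {t : G} (ht : t ∈ S) (x : G) : f (x + t) ≤ f x := by
  have := apply_le_one_of_mem_normalizedHarmonic hS hsym ht
    (normalizeAt_mem_normalizedHarmonic hf hpos x)
  rwa [normalizeAt, div_le_one (hpos x)] at this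

lemma periodic_of_forall_mem (hS : AddSubmonoid.closure {s | s ∈ S} = ⊤) {f : G → ℝ}
    (hf : ∀ s ∈ S, Function.Periodic f s) (u : G) : Function.Periodic f u := by
  induction (hS ▸ AddSubmonoid.mem_top u : u ∈ AddSubmonoid.closure {s | s ∈ S})
    using AddSubmonoid.closure_induction with
  | mem s hs => exact hf s hs
  | zero => exact fun x => by rw [add_zero]
  | add u v _ _ hu hv => exact fun x => by rw [← add_assoc, hv, hu]

theorem IsHarmonic.eq_of_nonneg (hS : AddSubmonoid.closure {s | s ∈ S} = ⊤)
    (hsym : S.map (fun s => -s) = S) {f : G → ℝ} (hf : IsHarmonic S f) (hf0 : 0 ≤ f)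
    (x y : G) : f x = f y := by
  by_cases hzero : ∃ z, f z = 0
  · obtain ⟨z, hz⟩ := hzero
    rw [hf.eq_zero_of_apply_eq_zero hS hf0 hz x, hf.eq_zero_of_apply_eq_zero hS hf0 hz y]
  push Not at hzero
  have hpos : ∀ z, 0 < f z := fun z => (hf0 z).lt_of_ne' (hzero z)
  have hper : ∀ s ∈ S, Function.Periodic f s := fun s hs z =>
    le_antisymm (hf.apply_add_le hS hsym hpos hs z) <| by
      simpa using hf.apply_add_le hS hsym hpos (neg_mem_of_map_neg_eq hsym hs) (z + s)
  simpa using (periodic_of_forall_mem hS hper (y - x) x).symm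

end Harmonic

theorem liouville_theorem_general (m l : ℕ) (q : Fin l → ℕ)
    (S : Multiset (AbG m l q))
    (hsym : S.map (fun s => -s) = S)
    (hgen : AddSubgroup.closure {s : AbG m l q | s ∈ S} = ⊤)
    (f : AbG m l q → ℝ) (hharm : ∀ x, lap S f x = 0) (hpos : ∀ x, 0 ≤ f x) :
    ∀ x y, f x = f y :=
  IsHarmonic.eq_of_nonneg (addSubmonoid_closure_eq_top hsym hgen) hsym hharm hpos

/-- **Liouville theorem** (Lemma 3.5). On the Cayley graph of a finitely generated abelian
group, every nonnegative harmonic function is constant. -/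
theorem liouville_theorem (m l : ℕ) (q : Fin l → ℕ) (hq : ∀ i, IsPrimePow (q i))
    (S : Multiset (AbG m l q))
    (hsym : S.map (fun s => -s) = S)
    (hgen : AddSubgroup.closure {s : AbG m l q | s ∈ S} = ⊤)
    (f : AbG m l q → ℝ) (hharm : ∀ x, lap S f x = 0) (hpos : ∀ x, 0 ≤ f x) :
    ∀ x y, f x = f y :=
  liouville_theorem_general m l q S hsym hgen f hharm hpos
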